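/- The compositional inverse of t·exp(−t) is the tree function T(t) = Σ_{n≥1} n^{n-1} t^n/n!, i.e. T(t)exp(−T(t)) = t. -/

import Mathlib

/-!
The coefficient of `tⁿ` in `T(t e^{-t})` is `Σ_k T_k [t^{n-k}] e^{-kt}
= (1/n!) Σ_k (-1)^{n-k} C(n,k) k^{n-1}`, the `n`-th forward difference at `0` of a polynomial of
degree `n - 1`, so it vanishes for `n ≥ 2`; the coefficients for `n = 0, 1` are those of `t`.
Thus `T` is a left compositional inverse of `t e^{-t}`. Since `t e^{-t}` has linear coefficient `1`
it also has a right inverse `Q`, and `T = T ∘ (t e^{-t}) ∘ Q = Q`, so `T` is a two-sided inverse: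
`T e^{-T} = t`.
-/

noncomputable section

/-- Composition `f(a)` of formal power series (the substitution of `a` into `f`,
valid when `a` has zero constant term). -/
def pcomp {R : Type*} [CommRing R] (f a : PowerSeries R) : PowerSeries R :=
  PowerSeries.mk fun n =>
    PowerSeries.coeff n (∑ k ∈ Finset.range (n + 1),
      PowerSeries.C (PowerSeries.coeff k f) * a ^ k)

/-- The tree function `T(t) = Σ_{n≥1} n^{n-1} tⁿ/n!`. -/
def treeFun : PowerSeries ℚ :=
  PowerSeries.mk fun n => if n = 0 then 0 else (n ^ (n - 1) : ℚ) / n.factorial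

open PowerSeries Finset

theorem sum_range_neg_one_pow_mul_choose_mul_pow_eq_zero {R : Type*} [CommRing R] {m n : ℕ}
    (h : m < n) : ∑ k ∈ range (n + 1), (-1 : R) ^ (n - k) * n.choose k * (k : R) ^ m = 0 := by
  have := fwdDiff_iter_eq_sum_shift (1 : R) (fun r : R => r ^ m) n 0
  rw [fwdDiff_iter_pow_eq_zero_of_lt h] at this
  simpa [zsmul_eq_mul] using this.symm

namespace PowerSeries

variable {R : Type*} [CommRing R]

theorem coeff_pow_eq_zero_of_lt {a : R⟦X⟧} (ha : constantCoeff a = 0) {n k : ℕ} (h : n < k) :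
    coeff n (a ^ k) = 0 :=
  X_pow_dvd_iff.mp (pow_dvd_pow_of_dvd (X_dvd_iff.mpr ha) k) n h

theorem coeff_subst_eq_sum_range {a : R⟦X⟧} (ha : constantCoeff a = 0) (f : R⟦X⟧) (n : ℕ) :
    coeff n (f.subst a) = ∑ k ∈ range (n + 1), coeff k f * coeff n (a ^ k) := by
  rw [coeff_subst' (HasSubst.of_constantCoeff_zero' ha),
    finsum_eq_sum_of_support_subset (s := range (n + 1))]
  · simp only [smul_eq_mul]
  · intro k hk
    rw [coe_range, Set.mem_Iio]
    by_contra! h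
    exact hk (by simp [coeff_pow_eq_zero_of_lt ha h])

theorem subst_eq_X_of_subst_eq_X {f g : R⟦X⟧} (hg : constantCoeff g = 0)
    (hg₁ : IsUnit (coeff 1 g)) (h : f.subst g = X) : g.subst f = X := by
  have hQ : HasSubst (g.substInvOfIsUnit hg₁) := HasSubst.substInvOfIsUnit g hg₁
  have hgQ : g.subst (g.substInvOfIsUnit hg₁) = X := subst_substInvOfIsUnit_right g hg hg₁
  have hfQ : f = g.substInvOfIsUnit hg₁ := by
    have hcomp := subst_comp_subst_apply (HasSubst.of_constantCoeff_zero' hg) hQ f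
    rw [h, hgQ, X_subst, subst_X hQ] at hcomp
    exact hcomp.symm
  rw [hfQ, hgQ]

theorem exp_subst_neg_X (A : Type*) [CommRing A] [Algebra ℚ A] :
    (exp A).subst (-X : A⟦X⟧) = rescale (-1) (exp A) := by
  rw [← neg_one_smul A X, rescale_eq_subst]

theorem exp_subst_neg_X_pow (A : Type*) [CommRing A] [Algebra ℚ A] (k : ℕ) :
    (exp A).subst (-X : A⟦X⟧) ^ k = rescale (-k : A) (exp A) := by
  rw [exp_subst_neg_X, ← map_pow, exp_pow_eq_rescale_exp, rescale_rescale, mul_neg_one]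

end PowerSeries

theorem pcomp_eq_subst {R : Type*} [CommRing R] {a : R⟦X⟧} (ha : constantCoeff a = 0)
    (f : R⟦X⟧) : pcomp f a = f.subst a := by
  ext n
  simp [pcomp, coeff_subst_eq_sum_range ha, coeff_C_mul]

theorem coeff_X_mul_exp_subst_neg_X_pow (n k : ℕ) :
    coeff n ((X * (exp ℚ).subst (-X : ℚ⟦X⟧)) ^ k)
      = if k ≤ n then (-k : ℚ) ^ (n - k) / (n - k).factorial else 0 := by
  rw [mul_pow, exp_subst_neg_X_pow, coeff_X_pow_mul']
  split_ifs
  · simp [coeff_rescale, coeff_exp, div_eq_mul_inv]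
  · rfl

theorem coeff_treeFun (n : ℕ) :
    coeff n treeFun = if n = 0 then 0 else (n ^ (n - 1) : ℚ) / n.factorial :=
  coeff_mk _ _

theorem coeff_treeFun_mul_neg_pow_div_factorial {n k : ℕ} (hn : 2 ≤ n) (hk : k ≤ n) :
    coeff k treeFun * ((-k : ℚ) ^ (n - k) / (n - k).factorial)
      = (-1) ^ (n - k) * n.choose k * (k : ℚ) ^ (n - 1) / n.factorial := by
  rw [coeff_treeFun, neg_pow', Nat.cast_choose ℚ hk]
  split_ifs with hk0
  · simp [hk0, zero_pow (by omega : n - 1 ≠ 0)]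
  · have hpow : (k : ℚ) ^ (k - 1) * (k : ℚ) ^ (n - k) = (k : ℚ) ^ (n - 1) := by
      rw [← pow_add]; congr 1; omega
    field_simp
    linear_combination hpow

theorem treeFun_subst_X_mul_exp_neg : treeFun.subst (X * (exp ℚ).subst (-X : ℚ⟦X⟧)) = X := by
  ext n
  rw [coeff_subst_eq_sum_range (by simp), coeff_X]
  simp_rw [coeff_X_mul_exp_subst_neg_X_pow]
  rcases Nat.lt_or_ge n 2 with hn | hn
  · interval_cases n <;> simp [sum_range_succ, coeff_treeFun]
  · rw [if_neg (by omega), ← zero_div (n.factorial : ℚ),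
      ← sum_range_neg_one_pow_mul_choose_mul_pow_eq_zero (by omega : n - 1 < n), sum_div]
    refine sum_congr rfl fun k hk => ?_
    have hkn : k ≤ n := Nat.lt_succ_iff.mp (mem_range.mp hk)
    rw [if_pos hkn, coeff_treeFun_mul_neg_pow_div_factorial hn hkn]

/-- The compositional inverse of `t·exp(−t)` is the tree function
`T(t) = Σ_{n≥1} n^{n-1} tⁿ/n!`, i.e. `T(t·e^{−t}) = t` and `T(t)·exp(−T(t)) = t`. -/
theorem tree_function_inverse :
    pcomp treeFun (PowerSeries.X * pcomp (PowerSeries.exp ℚ) (-PowerSeries.X))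
      = PowerSeries.X ∧
    treeFun * pcomp (PowerSeries.exp ℚ) (-treeFun) = PowerSeries.X := by
  have hT : constantCoeff treeFun = 0 := by
    simp [← coeff_zero_eq_constantCoeff_apply, coeff_treeFun]
  set g := X * (exp ℚ).subst (-X : ℚ⟦X⟧)
  have hg : constantCoeff g = 0 := by simp [g]
  have hTg : treeFun.subst g = X := treeFun_subst_X_mul_exp_neg
  have hgT : g.subst treeFun = X :=
    subst_eq_X_of_subst_eq_X hg (by simp [g, exp_subst_neg_X]) hTg
  refine ⟨by rw [pcomp_eq_subst (a := -X) (by simp), pcomp_eq_subst hg, hTg], ?_⟩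
  have hTs : HasSubst treeFun := HasSubst.of_constantCoeff_zero' hT
  have hnegT : (-X : ℚ⟦X⟧).subst treeFun = -treeFun := by
    rw [← coe_substAlgHom hTs, map_neg, coe_substAlgHom, subst_X hTs]
  rw [← hgT, pcomp_eq_subst (by simp [hT]), subst_mul hTs, subst_X hTs,
    subst_comp_subst_apply (HasSubst.of_constantCoeff_zero' (by simp)) hTs, hnegT]
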